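/- arXiv:math/0504213 — 3 statements merged into one kernel-verified Lean document; each statement's English description precedes it below -/
import Mathlib

section
/- Let Γ be a totally ordered abelian group and K the field of fractions of ℝ[Γ]. Define O := {x ∈ K : γ_x ≥ 0} where each nonzero x ∈ K is uniquely written as x = r_x e^{γ_x} f/g with r_x ∈ ℝ \ {0}, γ_x ∈ Γ, and f, g ∈ 1 + (span of e^γ with γ > 0). Then O is a valuation ring of K: it is a subring such that for every nonzero x ∈ K, x ∈ O or x⁻¹ ∈ O. -/
open scoped Classical

/-- The multiplicatively closed set `I_{>0}` of elements of `ℝ[Γ]` of the form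
`1 + (ℝ-linear combination of e^γ with γ > 0)`. -/
def Ipos (Γ : Type*) [AddCommGroup Γ] [LinearOrder Γ] [IsOrderedAddMonoid Γ] : Set (AddMonoidAlgebra ℝ Γ) :=
  {f | ∃ h : AddMonoidAlgebra ℝ Γ, f = 1 + h ∧ ∀ γ ∈ h.coeff.support, 0 < γ}

/-- `x ∈ K` has the normal form `x = r · e^γ · f / g` with `f, g ∈ I_{>0}`. -/
def hasVal (Γ : Type*) [AddCommGroup Γ] [LinearOrder Γ] [IsOrderedAddMonoid Γ]
    (x : FractionRing (AddMonoidAlgebra ℝ Γ)) (r : ℝ) (γ : Γ) : Prop :=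
  ∃ f ∈ Ipos Γ, ∃ g ∈ Ipos Γ,
    x * algebraMap (AddMonoidAlgebra ℝ Γ) (FractionRing (AddMonoidAlgebra ℝ Γ)) g =
      algebraMap (AddMonoidAlgebra ℝ Γ) (FractionRing (AddMonoidAlgebra ℝ Γ))
        (r • AddMonoidAlgebra.single γ (1 : ℝ) * f)

/-- `O = {x ∈ K : γ_x ≥ 0}` (with the convention that `0 ∈ O`). -/
def valO (Γ : Type*) [AddCommGroup Γ] [LinearOrder Γ] [IsOrderedAddMonoid Γ] :
    Set (FractionRing (AddMonoidAlgebra ℝ Γ)) :=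
  {x | x = 0 ∨ ∃ r : ℝ, ∃ γ : Γ, hasVal Γ x r γ ∧ 0 ≤ γ}

/-!
Every nonzero `p ∈ ℝ[Γ]` factors as `r e^γ f` with `γ` the least exponent of `p` and
`f ∈ I_{>0}`. Hence `O` consists exactly of the fractions `p / g` with `g ∈ I_{>0}` and `p`
supported on `Γ_{≥0}`, which is visibly a subring; and for `x = p / q`, comparing the least
exponents of `p` and `q` puts `x` or `x⁻¹` into `O`.
-/

namespace AddMonoidAlgebra

variable (k : Type*) {G : Type*} [Ring k] [AddMonoid G]

def supportedSubring (M : AddSubmonoid G) : Subring (AddMonoidAlgebra k G) where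
  carrier := {p | ↑p.coeff.support ⊆ (M : Set G)}
  zero_mem' := by simp
  one_mem' := fun g hg => by
    have := support_coeff_one_subset hg
    simp_all
  add_mem' {p q} hp hq := fun g hg => by
    rw [coeff_add] at hg
    rcases Finset.mem_union.mp (Finsupp.support_add hg) with h | h
    exacts [hp h, hq h]
  mul_mem' {p q} hp hq := fun g hg => by
    obtain ⟨a, ha, b, hb, rfl⟩ := Finset.mem_add.mp (support_coeff_mul_subset p q hg)
    exact M.add_mem (hp ha) (hq hb)
  neg_mem' {p} hp := by simpa [coeff_neg] using hp

variable {k}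

theorem mem_supportedSubring {M : AddSubmonoid G} {p : AddMonoidAlgebra k G} :
    p ∈ supportedSubring k M ↔ ∀ g ∈ p.coeff.support, g ∈ M :=
  Iff.rfl

theorem single_mem_supportedSubring {M : AddSubmonoid G} {g : G} (hg : g ∈ M) (a : k) :
    single g a ∈ supportedSubring k M := fun h hh => by
  rw [coeff_single] at hh
  rw [Finset.mem_singleton.mp (Finsupp.support_single_subset hh)]
  exact hg

end AddMonoidAlgebra

open AddMonoidAlgebra

theorem mul_map_eq_of_mul_eq_mul {A K : Type*} [CommRing A] [Field K] (φ : A →+* K) {x : K}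
    {p q f u : A} (hq : φ q ≠ 0) (hx : x * φ q = φ p) (h : q * u = p * f) :
    x * φ f = φ u := by
  refine mul_right_cancel₀ hq ?_
  calc x * φ f * φ q = x * φ q * φ f := by ring
    _ = φ (q * u) := by rw [hx, h, map_mul]
    _ = φ u * φ q := by rw [map_mul, mul_comm]

section ValuationRing

variable {Γ : Type*} [AddCommGroup Γ] [LinearOrder Γ] [IsOrderedAddMonoid Γ]

local notation "N" => supportedSubring ℝ (AddSubmonoid.nonneg Γ)
local notation "ι" => algebraMap (AddMonoidAlgebra ℝ Γ) (FractionRing (AddMonoidAlgebra ℝ Γ))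

theorem one_mem_Ipos : (1 : AddMonoidAlgebra ℝ Γ) ∈ Ipos Γ := ⟨0, by simp, by simp⟩

theorem mul_mem_Ipos {f g : AddMonoidAlgebra ℝ Γ} (hf : f ∈ Ipos Γ) (hg : g ∈ Ipos Γ) :
    f * g ∈ Ipos Γ := by
  obtain ⟨h, rfl, hh⟩ := hf
  obtain ⟨h', rfl, hh'⟩ := hg
  refine ⟨h + h' + h * h', by ring, ?_⟩
  intro γ hγ
  rw [coeff_add, coeff_add] at hγ
  rcases Finset.mem_union.mp (Finsupp.support_add hγ) with h1 | h1
  · rcases Finset.mem_union.mp (Finsupp.support_add h1) with h2 | h2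
    exacts [hh γ h2, hh' γ h2]
  · obtain ⟨a, ha, b, hb, rfl⟩ := Finset.mem_add.mp (support_coeff_mul_subset h h' h1)
    exact add_pos (hh a ha) (hh' b hb)

theorem coeff_zero_of_mem_Ipos {f : AddMonoidAlgebra ℝ Γ} (hf : f ∈ Ipos Γ) :
    f.coeff 0 = 1 := by
  obtain ⟨h, rfl, hh⟩ := hf
  have h0 : h.coeff 0 = 0 := Finsupp.notMem_support_iff.mp fun h0 => lt_irrefl _ (hh 0 h0)
  simp [coeff_add, h0, one_def]

theorem ne_zero_of_mem_Ipos {f : AddMonoidAlgebra ℝ Γ} (hf : f ∈ Ipos Γ) : f ≠ 0 := by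
  rintro rfl
  simpa using coeff_zero_of_mem_Ipos hf

theorem mem_Ipos_iff {f : AddMonoidAlgebra ℝ Γ} :
    f ∈ Ipos Γ ↔ f.coeff 0 = 1 ∧ f ∈ N := by
  refine ⟨fun hf => ⟨coeff_zero_of_mem_Ipos hf, ?_⟩,
    fun ⟨h0, hf⟩ => ⟨f - 1, by ring, ?_⟩⟩
  · obtain ⟨h, rfl, hh⟩ := hf
    refine add_mem (one_mem _) fun γ hγ => ?_
    exact AddSubmonoid.mem_nonneg.mpr (hh γ hγ).le
  · intro γ hγ
    rw [coeff_sub, Finsupp.mem_support_iff, one_def, coeff_single, Finsupp.sub_apply,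
      Finsupp.single_apply] at hγ
    split_ifs at hγ with hγ0
    · simp [← hγ0, h0] at hγ
    · exact lt_of_le_of_ne (hf (by simpa using hγ)) hγ0

theorem exists_eq_single_mul_of_ne_zero {p : AddMonoidAlgebra ℝ Γ} (hp : p ≠ 0) :
    ∃ γ ∈ p.coeff.support, ∃ r ≠ 0, ∃ f ∈ Ipos Γ, p = single γ r * f := by
  have hs : p.coeff.support.Nonempty :=
    Finsupp.support_nonempty_iff.mpr (mt coeff_eq_zero.mp hp)
  set γ := p.coeff.support.min' hs
  have hγ : γ ∈ p.coeff.support := p.coeff.support.min'_mem hs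
  set r := p.coeff γ
  have hr : r ≠ 0 := Finsupp.mem_support_iff.mp hγ
  have hcoeff : ∀ δ, (single (-γ) r⁻¹ * p).coeff δ = r⁻¹ * p.coeff (γ + δ) := by simp
  refine ⟨γ, hγ, r, hr, single (-γ) r⁻¹ * p,
    mem_Ipos_iff.mpr ⟨?_, mem_supportedSubring.mpr fun δ hδ => ?_⟩, ?_⟩
  · rw [hcoeff, add_zero, inv_mul_cancel₀ hr]
  · rw [Finsupp.mem_support_iff, hcoeff] at hδ
    have hle : γ ≤ γ + δ :=
      p.coeff.support.min'_le _ (Finsupp.mem_support_iff.mpr (right_ne_zero_of_mul hδ))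
    exact AddSubmonoid.mem_nonneg.mpr ((le_add_iff_nonneg_right γ).mp hle)
  · rw [← mul_assoc, single_mul_single, add_neg_cancel, mul_inv_cancel₀ hr, ← one_def,
      one_mul]

theorem exists_single_mul_mul_eq_of_le {r s : ℝ} (hs : s ≠ 0) {γ δ : Γ} (hδγ : δ ≤ γ)
    {f : AddMonoidAlgebra ℝ Γ} (hf : f ∈ Ipos Γ) (g : AddMonoidAlgebra ℝ Γ) :
    ∃ u ∈ N, single δ s * g * u = single γ r * f * g := by
  refine ⟨single (γ - δ) (r / s) * f,
    mul_mem (single_mem_supportedSubring (AddSubmonoid.mem_nonneg.mpr (sub_nonneg.mpr hδγ)) _)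
      (mem_Ipos_iff.mp hf).2, ?_⟩
  calc single δ s * g * (single (γ - δ) (r / s) * f)
      = single δ s * single (γ - δ) (r / s) * f * g := by ring
    _ = single γ r * f * g := by
      rw [single_mul_single, add_sub_cancel, mul_div_cancel₀ _ hs]

theorem exists_mul_eq_mul_or_exists_mul_eq_mul {p q : AddMonoidAlgebra ℝ Γ} (hp : p ≠ 0)
    (hq : q ≠ 0) :
    (∃ f ∈ Ipos Γ, ∃ u ∈ N, q * u = p * f) ∨
      (∃ f ∈ Ipos Γ, ∃ u ∈ N, p * u = q * f) := by
  obtain ⟨γ, -, r, hr, f, hf, rfl⟩ := exists_eq_single_mul_of_ne_zero hp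
  obtain ⟨δ, -, s, hs, g, hg, rfl⟩ := exists_eq_single_mul_of_ne_zero hq
  rcases le_total δ γ with hδγ | hγδ
  · exact .inl ⟨g, hg, exists_single_mul_mul_eq_of_le hs hδγ hf g⟩
  · exact .inr ⟨f, hf, exists_single_mul_mul_eq_of_le hr hγδ hg f⟩

variable (Γ) in
def valSubring : Subring (FractionRing (AddMonoidAlgebra ℝ Γ)) where
  carrier := {x | ∃ p ∈ N, ∃ g ∈ Ipos Γ, x * ι g = ι p}
  zero_mem' := ⟨0, zero_mem _, 1, one_mem_Ipos, by simp⟩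
  one_mem' := ⟨1, one_mem _, 1, one_mem_Ipos, by simp⟩
  add_mem' := by
    rintro x y ⟨p, hp, f, hf, hx⟩ ⟨q, hq, g, hg, hy⟩
    refine ⟨p * g + q * f, add_mem (mul_mem hp (mem_Ipos_iff.mp hg).2)
      (mul_mem hq (mem_Ipos_iff.mp hf).2), f * g, mul_mem_Ipos hf hg, ?_⟩
    calc (x + y) * ι (f * g) = x * ι f * ι g + y * ι g * ι f := by rw [map_mul]; ring
      _ = ι (p * g + q * f) := by rw [hx, hy, map_add, map_mul, map_mul]
  mul_mem' := by
    rintro x y ⟨p, hp, f, hf, hx⟩ ⟨q, hq, g, hg, hy⟩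
    refine ⟨p * q, mul_mem hp hq, f * g, mul_mem_Ipos hf hg, ?_⟩
    calc x * y * ι (f * g) = x * ι f * (y * ι g) := by rw [map_mul]; ring
      _ = ι (p * q) := by rw [hx, hy, map_mul]
  neg_mem' := by
    rintro x ⟨p, hp, f, hf, hx⟩
    exact ⟨-p, neg_mem hp, f, hf, by rw [neg_mul, hx, map_neg]⟩

theorem algebraMap_ne_zero_of_mem_Ipos {g : AddMonoidAlgebra ℝ Γ} (hg : g ∈ Ipos Γ) :
    ι g ≠ 0 :=
  (map_ne_zero_iff _ (IsFractionRing.injective _ _)).mpr (ne_zero_of_mem_Ipos hg)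

theorem coe_valSubring :
    (valSubring Γ : Set (FractionRing (AddMonoidAlgebra ℝ Γ))) = valO Γ := by
  ext x
  constructor
  · rintro ⟨p, hp, g, hg, hx⟩
    by_cases hp0 : p = 0
    · subst hp0
      exact .inl ((mul_eq_zero.mp (hx.trans (map_zero _))).resolve_right
        (algebraMap_ne_zero_of_mem_Ipos hg))
    obtain ⟨γ, hγ, r, -, f, hf, rfl⟩ := exists_eq_single_mul_of_ne_zero hp0
    exact .inr ⟨r, γ, ⟨f, hf, g, hg, by rwa [smul_single', mul_one]⟩,
      AddSubmonoid.mem_nonneg.mp (hp hγ)⟩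
  · rintro (rfl | ⟨r, γ, ⟨f, hf, g, hg, hx⟩, hγ⟩)
    · exact zero_mem _
    · rw [smul_single', mul_one] at hx
      exact ⟨_, mul_mem (single_mem_supportedSubring (AddSubmonoid.mem_nonneg.mpr hγ) r)
        (mem_Ipos_iff.mp hf).2, g, hg, hx⟩

theorem mem_valSubring_or_inv_mem {x : FractionRing (AddMonoidAlgebra ℝ Γ)} (hx : x ≠ 0) :
    x ∈ valSubring Γ ∨ x⁻¹ ∈ valSubring Γ := by
  obtain ⟨⟨p, q⟩, hpq⟩ := IsLocalization.surj (nonZeroDivisors (AddMonoidAlgebra ℝ Γ)) x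
  have hq : ι q ≠ 0 := IsFractionRing.to_map_ne_zero_of_mem_nonZeroDivisors q.2
  have hp : ι p ≠ 0 := hpq ▸ mul_ne_zero hx hq
  have hpq' : x⁻¹ * ι p = ι q := by rw [← hpq, inv_mul_cancel_left₀ hx]
  rcases exists_mul_eq_mul_or_exists_mul_eq_mul (ne_zero_of_map hp) (ne_zero_of_map hq) with
    ⟨f, hf, u, hu, h⟩ | ⟨f, hf, u, hu, h⟩
  · exact .inl ⟨u, hu, f, hf, mul_map_eq_of_mul_eq_mul _ hq hpq h⟩
  · exact .inr ⟨u, hu, f, hf, mul_map_eq_of_mul_eq_mul _ hp hpq' h⟩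

end ValuationRing

/-- `O` is a valuation ring in `K`: it is a subring of `K` such that for
every nonzero `x ∈ K` either `x ∈ O` or `x⁻¹ ∈ O`. -/
theorem valO_is_valuation_ring (Γ : Type*) [AddCommGroup Γ] [LinearOrder Γ] [IsOrderedAddMonoid Γ] :
    ∃ S : Subring (FractionRing (AddMonoidAlgebra ℝ Γ)),
      (S : Set (FractionRing (AddMonoidAlgebra ℝ Γ))) = valO Γ ∧
      ∀ x : FractionRing (AddMonoidAlgebra ℝ Γ), x ≠ 0 → x ∈ S ∨ x⁻¹ ∈ S :=
  ⟨valSubring Γ, coe_valSubring, fun _ => mem_valSubring_or_inv_mem⟩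
end

section
/- Applying the Robinson–Schensted correspondence to the longest element σ_{ν*} of the Young subgroup S_{ν*} of S_n yields a pair of tableaux whose common shape is ν. -/
/-- Row insertion: insert `x` into a row, bumping the leftmost entry larger than `x`. -/
def insRow : List ℕ → ℕ → List ℕ × Option ℕ
  | [], x => ([x], none)
  | a :: as, x =>
    if x < a then (x :: as, some a)
    else
      match insRow as x with
      | (r, b) => (a :: r, b)

/-- Robinson–Schensted insertion of `x` into a tableau (list of rows). -/
def insTab : List (List ℕ) → ℕ → List (List ℕ)
  | [], x => [[x]]
  | r :: rs, x =>
    match insRow r x with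
    | (r', none) => r' :: rs
    | (r', some b) => r' :: insTab rs b

/-- Shape of a tableau: the list of row lengths. -/
def shape (t : List (List ℕ)) : List ℕ := t.map List.length

/-- Index of the first position where two lists differ (here: the row where the shape grew). -/
def diffIdx : List ℕ → List ℕ → ℕ
  | [], _ => 0
  | _ :: _, [] => 0
  | a :: as, b :: bs => if a = b then diffIdx as bs + 1 else 0

/-- Append entry `k` at the end of row `i` of a tableau (creating a new row if needed). -/
def addAt : List (List ℕ) → ℕ → ℕ → List (List ℕ)
  | [], _, k => [[k]]
  | r :: rs, 0, k => (r ++ [k]) :: rs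
  | r :: rs, i + 1, k => r :: addAt rs i k

/-- The Robinson–Schensted pair `(P(w), Q(w))` of a word `w` (entries inserted in order,
with `Q` recording the order in which the boxes are created, by `1, 2, 3, …`). -/
def RSpair (w : List ℕ) : List (List ℕ) × List (List ℕ) :=
  (w.zip (List.range w.length)).foldl
    (fun PQ xk =>
      let P' := insTab PQ.1 xk.1
      (P', addAt PQ.2 (diffIdx (shape PQ.1) (shape P')) (xk.2 + 1)))
    ([], [])

/-- The insertion tableau `P(w)`. -/
def RSP (w : List ℕ) : List (List ℕ) := (RSpair w).1

/-- The recording tableau `Q(w)`. -/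
def RSQ (w : List ℕ) : List (List ℕ) := (RSpair w).2

/-- The conjugate of a partition given as a (weakly decreasing) list. -/
def conjL (ν : List ℕ) : List ℕ :=
  (List.range (ν.foldr max 0)).map fun i => ν.countP fun p => decide (i + 1 ≤ p)

/-- The word (one-line notation) of the longest element of the Young subgroup with block
sizes `μ`, acting on `{1, …, n}`: each consecutive block is reversed. -/
def blockRevWord : List ℕ → ℕ → List ℕ
  | [], _ => []
  | m :: ms, off => ((List.range m).reverse.map fun j => off + j + 1) ++ blockRevWord ms (off + m)


/-!
Write `c = ν*` for the column lengths of `ν`. The word of `σ_{ν*}` is a concatenation of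
decreasing runs `off + c, …, off + 1`, each exceeding every earlier letter. Inserting such a
run into a tableau stacks it as a new column at the ends of the first `c` rows: each new letter
bumps its predecessor one row down, and the box created at the `k`-th insertion of the run lies
in row `k`. Hence `P` and `Q` both arise by appending columns of heights `c₁, c₂, …`, so row `i`
has `#{j | i < c_j}` boxes: the shape is `c* = ν** = ν`.
-/

lemma insRow_append_of_le {r : List ℕ} {a : ℕ} (h : ∀ x ∈ r, x ≤ a) (l : List ℕ) :
    insRow (r ++ l) a = (r ++ (insRow l a).1, (insRow l a).2) := by
  induction r with
  | nil => rfl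
  | cons y ys ih =>
    rw [List.cons_append, insRow, if_neg (Nat.not_lt.mpr (h y (by simp))),
      ih fun x hx => h x (by simp [hx])]
    rfl

/-- Appends `a, a + 1, …, a + t - 1` to the ends of rows `0, …, t - 1` of `T`, padding `T` with
empty rows where it has fewer than `t`. -/
def appendColumn (T : List (List ℕ)) (a : ℕ) : ℕ → List (List ℕ)
  | 0 => T
  | t + 1 => (T.headD [] ++ [a]) :: appendColumn T.tail (a + 1) t

def addColumnShape (s : List ℕ) : ℕ → List ℕ
  | 0 => s
  | t + 1 => (s.headD 0 + 1) :: addColumnShape s.tail t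

lemma shape_appendColumn (T : List (List ℕ)) (a t : ℕ) :
    shape (appendColumn T a t) = addColumnShape (shape T) t := by
  induction t generalizing T a with
  | zero => rfl
  | succ t ih =>
    simp only [shape] at ih ⊢
    rw [appendColumn, addColumnShape, List.map_cons, ih]
    cases T <;> simp

lemma diffIdx_addColumnShape (s : List ℕ) (t : ℕ) :
    diffIdx (addColumnShape s t) (addColumnShape s (t + 1)) = t := by
  induction t generalizing s with
  | zero => cases s <;> simp [addColumnShape, diffIdx]
  | succ t ih => rw [addColumnShape, addColumnShape, diffIdx, if_pos rfl, ih]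

lemma insTab_appendColumn {T : List (List ℕ)} {a : ℕ} (h : ∀ r ∈ T, ∀ x ∈ r, x < a) (t : ℕ) :
    insTab (appendColumn T (a + 1) t) a = appendColumn T a (t + 1) := by
  induction t generalizing T a with
  | zero =>
    cases T with
    | nil => rfl
    | cons r rs =>
      have hrow := insRow_append_of_le (fun x hx => (h r (by simp) x hx).le) []
      simp only [List.append_nil] at hrow
      simp [insTab, appendColumn, hrow, insRow]
  | succ t ih =>
    have hhead : ∀ x ∈ T.headD [], x ≤ a := by
      cases T with
      | nil => simp
      | cons r rs => exact fun x hx => (h r (by simp) x hx).le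
    have hrow : insRow (T.headD [] ++ [a + 1]) a = (T.headD [] ++ [a], some (a + 1)) := by
      rw [insRow_append_of_le hhead]
      simp [insRow]
    rw [appendColumn, insTab, hrow]
    dsimp only
    rw [ih fun r hr x hx => (h r (List.mem_of_mem_tail hr) x hx).trans (Nat.lt_succ_self a)]
    rfl

lemma addAt_appendColumn (T : List (List ℕ)) (b t : ℕ) :
    addAt (appendColumn T b t) t (b + t) = appendColumn T b (t + 1) := by
  induction t generalizing T b with
  | zero => cases T <;> rfl
  | succ t ih =>
    rw [appendColumn, addAt, show b + (t + 1) = b + 1 + t by omega, ih]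
    rfl

lemma appendColumn_entries_le {T : List (List ℕ)} {a b t : ℕ} (h : ∀ r ∈ T, ∀ x ∈ r, x ≤ b)
    (hab : a + t ≤ b + 1) : ∀ r ∈ appendColumn T a t, ∀ x ∈ r, x ≤ b := by
  induction t generalizing T a with
  | zero => exact h
  | succ t ih =>
    have hhead : ∀ x ∈ T.headD [], x ≤ b := by
      cases T with
      | nil => simp
      | cons r rs => exact h r (by simp)
    rintro r (_ | ⟨_, hr⟩) x hx
    · rcases List.mem_append.mp hx with hx | hx
      · exact hhead x hx
      · simp at hx; omega
    · exact ih (fun r hr => h r (List.mem_of_mem_tail hr)) (by omega) r hr x hx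

def rsStep (PQ : List (List ℕ) × List (List ℕ)) (xk : ℕ × ℕ) :
    List (List ℕ) × List (List ℕ) :=
  let P' := insTab PQ.1 xk.1
  (P', addAt PQ.2 (diffIdx (shape PQ.1) (shape P')) (xk.2 + 1))

lemma RSpair_eq_foldl_rsStep (w : List ℕ) :
    RSpair w = (w.zip (List.range' 0 w.length)).foldl rsStep ([], []) := by
  rw [← List.range_eq_range']
  rfl

lemma rsStep_appendColumn {T : List (List ℕ)} {a : ℕ} (h : ∀ r ∈ T, ∀ x ∈ r, x < a) (b t : ℕ) :
    rsStep (appendColumn T (a + 1) t, appendColumn T (b + 1) t) (a, b + t) =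
      (appendColumn T a (t + 1), appendColumn T (b + 1) (t + 1)) := by
  simp only [rsStep, insTab_appendColumn h, shape_appendColumn, diffIdx_addColumnShape,
    show b + t + 1 = b + 1 + t by omega, addAt_appendColumn]

/-- The state after the first `t` letters `off + t + u, …, off + u + 1` of a decreasing run
have been inserted. -/
lemma foldl_rsStep_reverse_block {T : List (List ℕ)} {off : ℕ} (h : ∀ r ∈ T, ∀ x ∈ r, x ≤ off)
    (u t : ℕ) :
    ((((List.range u).reverse.map fun j => off + j + 1).zip (List.range' (off + t) u)).foldl
      rsStep (appendColumn T (off + u + 1) t, appendColumn T (off + 1) t)) =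
      (appendColumn T (off + 1) (t + u), appendColumn T (off + 1) (t + u)) := by
  induction u generalizing t with
  | zero => rfl
  | succ u ih =>
    rw [List.range_succ, List.reverse_append, List.map_append, List.range'_succ]
    simp only [List.reverse_singleton, List.map_singleton, List.singleton_append,
      List.zip_cons_cons, List.foldl_cons]
    rw [show off + (u + 1) + 1 = off + u + 1 + 1 by omega,
      rsStep_appendColumn (fun r hr x hx => Nat.lt_succ_of_le ((h r hr x hx).trans (by omega))),
      show off + t + 1 = off + (t + 1) by omega, ih, show t + 1 + u = t + (u + 1) by omega]

def appendColumns : List (List ℕ) → ℕ → List ℕ → List (List ℕ)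
  | T, _, [] => T
  | T, off, c :: cs => appendColumns (appendColumn T (off + 1) c) (off + c) cs

lemma foldl_rsStep_blockRevWord (cs : List ℕ) {T : List (List ℕ)} {off : ℕ}
    (h : ∀ r ∈ T, ∀ x ∈ r, x ≤ off) :
    ((blockRevWord cs off).zip (List.range' off (blockRevWord cs off).length)).foldl rsStep (T, T) =
      (appendColumns T off cs, appendColumns T off cs) := by
  induction cs generalizing T off with
  | nil => rfl
  | cons c cs ih =>
    rw [blockRevWord, List.length_append, ← List.range'_append_1,
      List.zip_append (by simp), List.foldl_append]
    have hlen : ((List.range c).reverse.map fun j => off + j + 1).length = c := by simp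
    have hblock := foldl_rsStep_reverse_block h c 0
    simp only [appendColumn, Nat.add_zero, Nat.zero_add] at hblock
    rw [hlen, hblock]
    exact ih (appendColumn_entries_le (fun r hr x hx => (h r hr x hx).trans (Nat.le_add_right _ _))
      (by omega))

lemma RSpair_blockRevWord (cs : List ℕ) :
    RSpair (blockRevWord cs 0) = (appendColumns [] 0 cs, appendColumns [] 0 cs) := by
  rw [RSpair_eq_foldl_rsStep]
  exact foldl_rsStep_blockRevWord cs (by simp)

lemma shape_appendColumns (cs : List ℕ) (T : List (List ℕ)) (off : ℕ) :
    shape (appendColumns T off cs) = cs.foldl addColumnShape (shape T) := by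
  induction cs generalizing T off with
  | nil => rfl
  | cons c cs ih => rw [appendColumns, ih, shape_appendColumn, List.foldl_cons]

lemma List.ext_getD {α : Type*} {l₁ l₂ : List α} (d : α) (hlen : l₁.length = l₂.length)
    (h : ∀ i, l₁.getD i d = l₂.getD i d) : l₁ = l₂ :=
  List.ext_getElem hlen fun i h₁ h₂ => by simpa [List.getD_eq_getElem, h₁, h₂] using h i

lemma length_addColumnShape (s : List ℕ) (t : ℕ) :
    (addColumnShape s t).length = max s.length t := by
  induction t generalizing s with
  | zero => simp [addColumnShape]
  | succ t ih => rw [addColumnShape, List.length_cons, ih, List.length_tail]; omega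

lemma getD_addColumnShape (s : List ℕ) (t i : ℕ) :
    (addColumnShape s t).getD i 0 = s.getD i 0 + if i < t then 1 else 0 := by
  induction t generalizing s i with
  | zero => simp [addColumnShape]
  | succ t ih =>
    rw [addColumnShape]
    cases i with
    | zero => cases s <;> simp
    | succ i => rw [List.getD_cons_succ, ih]; cases s <;> simp

lemma length_foldl_addColumnShape (cs s : List ℕ) :
    (cs.foldl addColumnShape s).length = max s.length (cs.foldr max 0) := by
  induction cs generalizing s with
  | nil => simp
  | cons c cs ih => rw [List.foldl_cons, ih, length_addColumnShape, List.foldr_cons, max_assoc]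

lemma getD_foldl_addColumnShape (cs s : List ℕ) (i : ℕ) :
    (cs.foldl addColumnShape s).getD i 0 = s.getD i 0 + cs.countP (i < ·) := by
  induction cs generalizing s with
  | nil => simp
  | cons c cs ih =>
    rw [List.foldl_cons, ih, getD_addColumnShape, List.countP_cons]
    simp only [decide_eq_true_eq]
    omega

lemma length_conjL (μ : List ℕ) : (conjL μ).length = μ.foldr max 0 := by
  simp [conjL]

lemma getD_conjL (μ : List ℕ) (i : ℕ) : (conjL μ).getD i 0 = μ.countP (i < ·) := by
  by_cases hi : i < μ.foldr max 0
  · simp [conjL, hi]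
  · rw [List.getD_eq_default _ _ (by rw [length_conjL]; omega), eq_comm, List.countP_eq_zero]
    intro p hp
    have : p ≤ μ.foldr max 0 := List.le_max_of_le hp le_rfl
    simp only [decide_eq_true_eq]
    omega

lemma foldl_addColumnShape_nil (cs : List ℕ) : cs.foldl addColumnShape [] = conjL cs :=
  List.ext_getD 0 (by simp [length_foldl_addColumnShape, length_conjL])
    fun i => by rw [getD_foldl_addColumnShape, getD_conjL, List.getD_nil, Nat.zero_add]

lemma shape_appendColumns_nil (cs : List ℕ) : shape (appendColumns [] 0 cs) = conjL cs := by
  rw [shape_appendColumns, shape, List.map_nil, foldl_addColumnShape_nil]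

/-- The parts of a partition exceeding `j` form a prefix of it, so the `j`-th column of `ν` is
longer than `i` exactly when row `i` is longer than `j`. -/
lemma lt_countP_iff_lt_getD {ν : List ℕ} (hν : ν.Pairwise (· ≥ ·)) (i j : ℕ) :
    i < ν.countP (j < ·) ↔ j < ν.getD i 0 := by
  induction ν generalizing i with
  | nil => simp
  | cons p rest ih =>
    have ih := ih (List.pairwise_cons.mp hν).2
    by_cases hjp : j < p
    · rw [List.countP_cons_of_pos (by simpa)]
      cases i with
      | zero => simp [hjp]
      | succ i => rw [List.getD_cons_succ, ← ih]; omega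
    · have hzero : (p :: rest).countP (j < ·) = 0 := by
        refine List.countP_eq_zero.mpr fun a ha => ?_
        have : a ≤ p := by
          rcases List.mem_cons.mp ha with rfl | ha
          · exact le_rfl
          · exact (List.pairwise_cons.mp hν).1 a ha
        simp only [decide_eq_true_eq]
        omega
      cases i with
      | zero => simpa [hzero] using hjp
      | succ i =>
        rw [List.getD_cons_succ, ← ih, hzero]
        rw [List.countP_cons] at hzero
        omega

lemma countP_range_lt (M a : ℕ) : (List.range M).countP (· < a) = min M a := by
  induction M with
  | zero => simp
  | succ M ih =>
    rw [List.range_succ, List.countP_append, ih]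
    by_cases h : M < a <;> simp [h] <;> omega

lemma foldr_max_conjL {ν : List ℕ} (hpos : ∀ p ∈ ν, 0 < p) :
    (conjL ν).foldr max 0 = ν.length := by
  apply le_antisymm
  · refine List.max_le_of_forall_le _ _ fun x hx => ?_
    obtain ⟨j, -, rfl⟩ := List.mem_map.mp hx
    exact List.countP_le_length
  · cases ν with
    | nil => simp
    | cons p rest =>
      have hM : 0 < (p :: rest).foldr max 0 :=
        (hpos p (by simp)).trans_le (List.le_max_of_le (by simp) le_rfl)
      refine List.le_max_of_le (List.mem_map.mpr ⟨0, List.mem_range.mpr hM, rfl⟩) (le_of_eq ?_)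
      refine (List.countP_eq_length.mpr fun a ha => ?_).symm
      simpa [Nat.one_le_iff_ne_zero, Nat.pos_iff_ne_zero] using hpos a ha

lemma conjL_conjL {ν : List ℕ} (hsort : ν.Pairwise (· ≥ ·)) (hpos : ∀ p ∈ ν, 0 < p) :
    conjL (conjL ν) = ν := by
  refine List.ext_getD 0 (by rw [length_conjL, foldr_max_conjL hpos]) fun i => ?_
  have hle : ν.getD i 0 ≤ ν.foldr max 0 := by
    by_cases hi : i < ν.length
    · rw [List.getD_eq_getElem _ _ hi]
      exact List.le_max_of_le (List.getElem_mem hi) le_rfl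
    · rw [List.getD_eq_default _ _ (by omega)]
      exact Nat.zero_le _
  calc (conjL (conjL ν)).getD i 0
      = (List.range (ν.foldr max 0)).countP (· < ν.getD i 0) := by
        rw [getD_conjL, conjL, List.countP_map]
        exact List.countP_congr fun j _ => by simpa using lt_countP_iff_lt_getD hsort i j
    _ = ν.getD i 0 := by rw [countP_range_lt]; omega

theorem RS_longest_young_conj_general (ν : List ℕ) (hsort : ν.Pairwise (· ≥ ·))
    (hpos : ∀ p ∈ ν, 0 < p) :
    shape (RSP (blockRevWord (conjL ν) 0)) = ν ∧
    shape (RSQ (blockRevWord (conjL ν) 0)) = ν := by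
  have hshape : shape (appendColumns [] 0 (conjL ν)) = ν := by
    rw [shape_appendColumns_nil, conjL_conjL hsort hpos]
  exact ⟨by rw [RSP, RSpair_blockRevWord, hshape], by rw [RSQ, RSpair_blockRevWord, hshape]⟩

/-- applying Robinson–Schensted to the longest element `σ_{ν*}` of the Young
subgroup `S_{ν*}` of `S_n` yields a pair of tableaux of common shape `ν`. -/
theorem RS_longest_young_conj (n : ℕ) (ν : List ℕ) (hsort : ν.Pairwise (· ≥ ·))
    (hpos : ∀ p ∈ ν, 0 < p) (hsum : ν.sum = n) :
    shape (RSP (blockRevWord (conjL ν) 0)) = ν ∧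
    shape (RSQ (blockRevWord (conjL ν) 0)) = ν :=
  RS_longest_young_conj_general ν hsort hpos
end

section
/- Let n ≥ 2, and let Γ be a totally ordered abelian group with elements a, b ∈ Γ satisfying b > (n−1)a > 0. For a bipartition (λ₁, λ₂) of n, define α(λ₁,λ₂) := b·|λ₂| + a·(n(λ₁) + 2n(λ₂*) − n(λ₂)). If (λ₁, λ₂) and (μ₁, μ₂) are bipartitions of n with |λ₂| = |μ₂| + 1, such that λ₁ is obtained from μ₁ by decreasing one part by 1 and λ₂ is obtained from μ₂ by increasing one part by 1, then α(λ₁,λ₂) > α(μ₁,μ₂). -/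
/-- `ν : ℕ → ℕ` (0-indexed parts) is a partition of `m`. -/
def IsPartitionOf (ν : ℕ → ℕ) (m : ℕ) : Prop :=
  (∀ i j, i ≤ j → ν j ≤ ν i) ∧ (∀ i, m ≤ i → ν i = 0) ∧ ∑ i ∈ Finset.range m, ν i = m

/-- The conjugate partition: `ν*^{(i+1)} = #{j : ν^{(j+1)} ≥ i+1}`. -/
noncomputable def conjP (ν : ℕ → ℕ) (i : ℕ) : ℕ :=
  Nat.card {j : ℕ | i + 1 ≤ ν j}

/-- `n(ν) = Σ_i (i-1)·ν^{(i)}`; with 0-indexed parts this is `Σ i·ν i`. -/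
def nInv (n : ℕ) (ν : ℕ → ℕ) : ℕ := ∑ i ∈ Finset.range n, i * ν i

/-- The invariant `α(λ₁,λ₂) = b·|λ₂| + a·(n(λ₁) + 2n(λ₂*) − n(λ₂))` of a bipartition,
where `s₂ = |λ₂|`. -/
noncomputable def alphaInv {Γ : Type*} [AddCommGroup Γ] [LinearOrder Γ] [IsOrderedAddMonoid Γ] (a b : Γ)
    (n s₂ : ℕ) (l1 l2 : ℕ → ℕ) : Γ :=
  s₂ • b + (nInv n l1 + 2 * nInv n (conjP l2)) • a - (nInv n l2) • a

/-!
Moving a box from the part of index `m` of `μ₁` to the part of index `r` of `μ₂` lowers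
`n(μ₁)` by `m`, raises `n(μ₂)` by `r`, and raises `n(μ₂*)` by `μ₂^{(r)}`, since the conjugate gains
a box in column `μ₂^{(r)}`. Hence `α(λ₁,λ₂) - α(μ₁,μ₂) = b + a(2μ₂^{(r)} - m - r)`, and
`m + r ≤ n - 1` because `m < |μ₁|` and `r ≤ |μ₂|`; so `b > (n-1)a` wins.
-/

def IsIncrementAt (f g : ℕ → ℕ) (p : ℕ) : Prop :=
  g p = f p + 1 ∧ ∀ i, i ≠ p → g i = f i

namespace IsIncrementAt

variable {f g : ℕ → ℕ} {p : ℕ}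

lemma nInv_eq (h : IsIncrementAt f g p) {n : ℕ} (hp : p < n) :
    nInv n g = nInv n f + p := by
  have hp' := Finset.mem_range.2 hp
  unfold nInv
  rw [← Finset.sum_erase_add _ _ hp', ← Finset.sum_erase_add _ (fun i => i * f i) hp',
    Finset.sum_congr rfl fun i hi => by rw [h.2 i (Finset.ne_of_mem_erase hi)], h.1]
  ring

lemma conjP (h : IsIncrementAt f g p) (hfin : {j | f p < f j}.Finite) :
    IsIncrementAt (conjP f) (conjP g) (f p) := by
  refine ⟨?_, fun i hi => ?_⟩ <;> simp only [_root_.conjP, Nat.card_coe_set_eq]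
  · have hins : {j | f p + 1 ≤ g j} = insert p {j | f p + 1 ≤ f j} := by
      ext j
      rcases eq_or_ne j p with rfl | hj
      · simp [h.1]
      · simp [h.2 j hj, hj]
    rw [hins, Set.ncard_insert_of_notMem (by simp) (by simpa [Nat.succ_le_iff] using hfin)]
  · congr 1
    ext j
    rcases eq_or_ne j p with rfl | hj
    · simp only [Set.mem_ofPred_eq, h.1]
      omega
    · simp only [Set.mem_ofPred_eq, h.2 j hj]

end IsIncrementAt

namespace IsPartitionOf

variable {ν : ℕ → ℕ} {k : ℕ}

lemma lt_of_pos (h : IsPartitionOf ν k) {i : ℕ} (hi : 0 < ν i) : i < k := by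
  by_contra hk
  exact hi.ne' (h.2.1 i (not_lt.1 hk))

lemma apply_le (h : IsPartitionOf ν k) (i : ℕ) : ν i ≤ k := by
  rcases lt_or_ge i k with hi | hi
  · exact h.2.2 ▸ Finset.single_le_sum (fun j _ => Nat.zero_le _) (Finset.mem_range.2 hi)
  · simp [h.2.1 i hi]

lemma finite_setOf_lt (h : IsPartitionOf ν k) (c : ℕ) : {j | c < ν j}.Finite :=
  (Set.finite_Iio k).subset fun _ hj => h.lt_of_pos (Nat.zero_lt_of_lt hj)

end IsPartitionOf

lemma alphaInv_succ_add_eq {Γ : Type*} [AddCommGroup Γ] [LinearOrder Γ] [IsOrderedAddMonoid Γ]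
    (a b : Γ) (n k p q r : ℕ) {l1 l2 m1 m2 : ℕ → ℕ}
    (h₁ : nInv n m1 = nInv n l1 + p) (h₂ : nInv n (conjP l2) = nInv n (conjP m2) + q)
    (h₃ : nInv n l2 = nInv n m2 + r) :
    alphaInv a b n (k + 1) l1 l2 + (p + r) • a = alphaInv a b n k m1 m2 + b + (2 * q) • a := by
  simp only [alphaInv, h₁, h₂, h₃, add_nsmul, mul_add, succ_nsmul]
  abel

theorem alpha_strict_increase_general (n : ℕ) (Γ : Type*)
    [AddCommGroup Γ] [LinearOrder Γ] [IsOrderedAddMonoid Γ] (a b : Γ)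
    (ha : 0 < (n - 1) • a) (hb : (n - 1) • a < b)
    (l1 l2 m1 m2 : ℕ → ℕ) (n2 k1 k2 : ℕ)
    (h2 : IsPartitionOf l2 n2)
    (h3 : IsPartitionOf m1 k1) (h4 : IsPartitionOf m2 k2) (hkn : k1 + k2 = n)
    (hsz : n2 = k2 + 1)
    (hdec : ∃ m, 0 < m1 m ∧ l1 m = m1 m - 1 ∧ ∀ i, i ≠ m → l1 i = m1 i)
    (hinc : ∃ r, l2 r = m2 r + 1 ∧ ∀ i, i ≠ r → l2 i = m2 i) :
    alphaInv a b n k2 m1 m2 < alphaInv a b n n2 l1 l2 := by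
  obtain ⟨m, hpos, hml, hmo⟩ := hdec
  obtain ⟨r, hinc⟩ : ∃ r, IsIncrementAt m2 l2 r := hinc
  have hdec : IsIncrementAt l1 m1 m := ⟨by omega, fun i hi => (hmo i hi).symm⟩
  have hm : m < k1 := h3.lt_of_pos hpos
  have hr : r < k2 + 1 := hsz ▸ h2.lt_of_pos (hinc.1 ▸ Nat.succ_pos _)
  have hm2r : m2 r ≤ k2 := h4.apply_le r
  have hα := alphaInv_succ_add_eq a b n k2 m (m2 r) r (hdec.nInv_eq (by omega))
    ((hinc.conjP (h4.finite_setOf_lt _)).nInv_eq (by omega)) (hinc.nInv_eq (by omega))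
  have ha₀ : 0 ≤ a := ((nsmul_pos_iff fun h => by simp [h] at ha).1 ha).le
  have hmr : (m + r) • a < b + (2 * m2 r) • a :=
    calc (m + r) • a ≤ (n - 1) • a := nsmul_le_nsmul_left ha₀ (by omega)
      _ < b := hb
      _ ≤ b + (2 * m2 r) • a := le_add_of_nonneg_right (nsmul_nonneg ha₀ _)
  subst hsz
  rw [← add_lt_add_iff_right ((m + r) • a), hα, add_assoc]
  exact add_lt_add_right hmr _

/-- in the asymptotic case `b > (n−1)a > 0`, if the bipartition `(λ₁, λ₂)`
of `n` is obtained from `(μ₁, μ₂)` by moving one box from the first component to the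
second (so `|λ₂| = |μ₂| + 1`, one part of `μ₁` decreases by `1` and one part of `μ₂`
increases by `1`), then `α(λ₁,λ₂) > α(μ₁,μ₂)`. -/
theorem alpha_strict_increase (n : ℕ) (hn : 2 ≤ n) (Γ : Type*)
    [AddCommGroup Γ] [LinearOrder Γ] [IsOrderedAddMonoid Γ] (a b : Γ)
    (ha : 0 < (n - 1) • a) (hb : (n - 1) • a < b)
    (l1 l2 m1 m2 : ℕ → ℕ) (n1 n2 k1 k2 : ℕ)
    (h1 : IsPartitionOf l1 n1) (h2 : IsPartitionOf l2 n2) (hln : n1 + n2 = n)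
    (h3 : IsPartitionOf m1 k1) (h4 : IsPartitionOf m2 k2) (hkn : k1 + k2 = n)
    (hsz : n2 = k2 + 1)
    (hdec : ∃ m, 0 < m1 m ∧ l1 m = m1 m - 1 ∧ ∀ i, i ≠ m → l1 i = m1 i)
    (hinc : ∃ r, l2 r = m2 r + 1 ∧ ∀ i, i ≠ r → l2 i = m2 i) :
    alphaInv a b n k2 m1 m2 < alphaInv a b n n2 l1 l2 :=
  alpha_strict_increase_general n Γ a b ha hb l1 l2 m1 m2 n2 k1 k2 h2 h3 h4 hkn hsz hdec hinc
end
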